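/- (Isomorphism of exact natural latents) Suppose Λ and Λ' are both exact natural latents over X₁, X₂: each mediates (X₁ ⊥ X₂ given it) and each is a redund (a deterministic function of X₁ alone and of X₂ alone). Then Λ and Λ' are isomorphic: each is almost surely a deterministic function of the other. -/
import Mathlib


open scoped Classical BigOperators

noncomputable section

/-- Probability of an event under a mass function `p` on a finite sample space. -/
def prob {Ω : Type*} [Fintype Ω] (p : Ω → ℝ) (E : Ω → Prop) : ℝ :=
  ∑ ω, if E ω then p ω else 0

/-- `X₁` and `X₂` are conditionally independent given `Λ`. -/
def Mediates {Ω α β γ : Type*} [Fintype Ω]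
    (p : Ω → ℝ) (X1 : Ω → α) (X2 : Ω → β) (L : Ω → γ) : Prop :=
  ∀ x1 x2 l,
    prob p (fun ω => X1 ω = x1 ∧ X2 ω = x2 ∧ L ω = l) * prob p (fun ω => L ω = l)
      = prob p (fun ω => X1 ω = x1 ∧ L ω = l) * prob p (fun ω => X2 ω = x2 ∧ L ω = l)

lemma prob_nonneg {Ω : Type*} [Fintype Ω] (p : Ω → ℝ) (hp : ∀ ω, 0 ≤ p ω)
    (E : Ω → Prop) : 0 ≤ prob p E := by
  apply Finset.sum_nonneg
  intro ω _
  split <;> simp [hp ω]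

lemma prob_pos {Ω : Type*} [Fintype Ω] (p : Ω → ℝ) (hp : ∀ ω, 0 ≤ p ω)
    (E : Ω → Prop) (ω : Ω) (hE : E ω) (hω : p ω ≠ 0) : 0 < prob p E := by
  have hpos : 0 < p ω := lt_of_le_of_ne (hp ω) (Ne.symm hω)
  have : (if E ω then p ω else 0) ≤ prob p E := by
    apply Finset.single_le_sum (f := fun ω => if E ω then p ω else 0)
    · intro i _; split <;> simp [hp i]
    · exact Finset.mem_univ ω
  rw [if_pos hE] at this
  linarith

lemma exists_of_prob_pos {Ω : Type*} [Fintype Ω] (p : Ω → ℝ)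
    (E : Ω → Prop) (h : 0 < prob p E) : ∃ ω, E ω ∧ p ω ≠ 0 := by
  by_contra hc
  push_neg at hc
  have : prob p E = 0 := by
    apply Finset.sum_eq_zero
    intro ω _
    by_cases hE : E ω
    · simp [hE, hc ω hE]
    · simp [hE]
  linarith

/-- Key step: if L mediates and L' is a redund, then L' is constant on
positive-probability fibers of L. -/
lemma key {Ω α β γ δ : Type*} [Fintype Ω]
    (p : Ω → ℝ) (hp : ∀ ω, 0 ≤ p ω)
    (X1 : Ω → α) (X2 : Ω → β) (L : Ω → γ) (L' : Ω → δ)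
    (hmedL : Mediates p X1 X2 L)
    (g1 : α → δ) (g2 : β → δ)
    (hL'g1 : ∀ ω, p ω ≠ 0 → L' ω = g1 (X1 ω)) (hL'g2 : ∀ ω, p ω ≠ 0 → L' ω = g2 (X2 ω))
    (ω ω' : Ω) (hω : p ω ≠ 0) (hω' : p ω' ≠ 0) (hL : L ω = L ω') :
    L' ω = L' ω' := by
  set x1 := X1 ω
  set x2 := X2 ω'
  set l := L ω with hl
  have h1 : 0 < prob p (fun ω'' => X1 ω'' = x1 ∧ L ω'' = l) :=
    prob_pos p hp _ ω ⟨rfl, rfl⟩ hω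
  have h2 : 0 < prob p (fun ω'' => X2 ω'' = x2 ∧ L ω'' = l) :=
    prob_pos p hp _ ω' ⟨rfl, hL.symm⟩ hω'
  have hm := hmedL x1 x2 l
  have hLl : 0 ≤ prob p (fun ω'' => L ω'' = l) := prob_nonneg p hp _
  have hjoint : 0 < prob p (fun ω'' => X1 ω'' = x1 ∧ X2 ω'' = x2 ∧ L ω'' = l) := by
    by_contra hc
    push_neg at hc
    have hj0 : prob p (fun ω'' => X1 ω'' = x1 ∧ X2 ω'' = x2 ∧ L ω'' = l) = 0 :=
      le_antisymm hc (prob_nonneg p hp _)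
    rw [hj0, zero_mul] at hm
    nlinarith
  obtain ⟨ω'', ⟨hx1, hx2, -⟩, hpω''⟩ := exists_of_prob_pos p _ hjoint
  calc L' ω = g1 x1 := hL'g1 ω hω
    _ = g1 (X1 ω'') := by rw [hx1]
    _ = L' ω'' := (hL'g1 ω'' hpω'').symm
    _ = g2 (X2 ω'') := hL'g2 ω'' hpω''
    _ = g2 x2 := by rw [hx2]
    _ = L' ω' := (hL'g2 ω' hω').symm

/-- Isomorphism of exact natural latents: if Λ and Λ' are both exact natural
latents over X₁, X₂ (each mediates, and each is a.s. a deterministic function of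
X₁ alone and of X₂ alone), then each is a.s. a deterministic function of the other. -/
theorem natural_latents_isomorphic
    {Ω α β γ δ : Type*} [Fintype Ω] [Fintype α] [Fintype β]
    (p : Ω → ℝ) (hp : ∀ ω, 0 ≤ p ω) (hsum : ∑ ω, p ω = 1)
    (X1 : Ω → α) (X2 : Ω → β) (L : Ω → γ) (L' : Ω → δ)
    (hmedL : Mediates p X1 X2 L) (hmedL' : Mediates p X1 X2 L')
    (f1 : α → γ) (f2 : β → γ)
    (hLf1 : ∀ ω, p ω ≠ 0 → L ω = f1 (X1 ω)) (hLf2 : ∀ ω, p ω ≠ 0 → L ω = f2 (X2 ω))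
    (g1 : α → δ) (g2 : β → δ)
    (hL'g1 : ∀ ω, p ω ≠ 0 → L' ω = g1 (X1 ω)) (hL'g2 : ∀ ω, p ω ≠ 0 → L' ω = g2 (X2 ω)) :
    (∃ h : γ → δ, ∀ ω, p ω ≠ 0 → L' ω = h (L ω)) ∧
    (∃ h' : δ → γ, ∀ ω, p ω ≠ 0 → L ω = h' (L' ω)) := by
  have hω₀ : ∃ ω₀ : Ω, p ω₀ ≠ 0 := by
    by_contra hc
    push_neg at hc
    rw [Finset.sum_eq_zero (fun ω _ => hc ω)] at hsum
    norm_num at hsum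
  obtain ⟨ω₀, hω₀⟩ := hω₀
  constructor
  · refine ⟨fun l => if hex : ∃ ω, p ω ≠ 0 ∧ L ω = l then L' hex.choose else L' ω₀, ?_⟩
    intro ω hω
    have hex : ∃ ω', p ω' ≠ 0 ∧ L ω' = L ω := ⟨ω, hω, rfl⟩
    beta_reduce
    rw [dif_pos hex]
    exact key p hp X1 X2 L L' hmedL g1 g2 hL'g1 hL'g2 ω hex.choose hω
      hex.choose_spec.1 hex.choose_spec.2.symm
  · refine ⟨fun l => if hex : ∃ ω, p ω ≠ 0 ∧ L' ω = l then L hex.choose else L ω₀, ?_⟩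
    intro ω hω
    have hex : ∃ ω', p ω' ≠ 0 ∧ L' ω' = L' ω := ⟨ω, hω, rfl⟩
    beta_reduce
    rw [dif_pos hex]
    exact key p hp X1 X2 L' L hmedL' f1 f2 hLf1 hLf2 ω hex.choose hω
      hex.choose_spec.1 hex.choose_spec.2.symm
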